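/- arXiv:2109.14111 — 2 statements merged into one kernel-verified Lean document; each statement's English description precedes it below -/
import Mathlib

section
/- Let a ≤ b be real numbers and let θ : ℝ → ℝ be continuous and strictly increasing on [a,b]. Then the number of points t ∈ (a,b] at which θ(t) is an integer equals ⌊θ(b)⌋ - ⌊θ(a)⌋. (Interpretation: the cumulative frame count σ⟨a,b⟩ := ⌊θ(b)⌋ - ⌊θ(a)⌋ counts exactly the frame-transmission events, i.e., the integer crossings of the clock phase, in the interval (a,b].) -/
/-- In the bittide abstract frame model, the cumulative frame count
`σ⟨a,b⟩ = ⌊θ(b)⌋ - ⌊θ(a)⌋` counts exactly the integer crossings of the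
clock phase `θ` in the interval `(a, b]`. -/
theorem frame_count_eq_integer_crossings
    (a b : ℝ) (hab : a ≤ b) (θ : ℝ → ℝ)
    (hcont : ContinuousOn θ (Set.Icc a b))
    (hmono : StrictMonoOn θ (Set.Icc a b)) :
    ({t ∈ Set.Ioc a b | ∃ n : ℤ, θ t = (n : ℝ)}.ncard : ℤ)
      = ⌊θ b⌋ - ⌊θ a⌋ := by
  set S : Set ℝ := {t ∈ Set.Ioc a b | ∃ n : ℤ, θ t = (n : ℝ)} with hS
  have hbij : Set.BijOn (fun t => ⌊θ t⌋) S (Set.Ioc ⌊θ a⌋ ⌊θ b⌋) := by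
    refine ⟨?_, ?_, ?_⟩
    · rintro t ⟨ht, n, hn⟩
      have hta : θ a < θ t := hmono ⟨le_refl a, hab⟩ ⟨le_of_lt ht.1, ht.2⟩ ht.1
      have htb : θ t ≤ θ b := hmono.monotoneOn ⟨le_of_lt ht.1, ht.2⟩ ⟨hab, le_refl b⟩ ht.2
      rw [hn] at hta htb
      simp only [hn, Int.floor_intCast]
      exact ⟨Int.floor_lt.2 hta, Int.le_floor.2 htb⟩
    · rintro t1 ⟨ht1, n1, hn1⟩ t2 ⟨ht2, n2, hn2⟩ heq
      simp only [hn1, hn2, Int.floor_intCast] at heq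
      have : θ t1 = θ t2 := by rw [hn1, hn2, heq]
      exact hmono.injOn ⟨le_of_lt ht1.1, ht1.2⟩ ⟨le_of_lt ht2.1, ht2.2⟩ this
    · rintro n ⟨hn1, hn2⟩
      have h1 : θ a < (n : ℝ) := Int.floor_lt.1 hn1
      have h2 : (n : ℝ) ≤ θ b := le_trans (by exact_mod_cast hn2) (Int.floor_le _)
      obtain ⟨t, ht, htn⟩ := intermediate_value_Ioc hab hcont ⟨h1, h2⟩
      exact ⟨t, ⟨ht, n, htn⟩, by simp [htn]⟩
  have himg : (fun t => ⌊θ t⌋) '' S = Set.Ioc ⌊θ a⌋ ⌊θ b⌋ := hbij.image_eq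
  have hcard : S.ncard = (Set.Ioc ⌊θ a⌋ ⌊θ b⌋ : Set ℤ).ncard := by
    rw [← himg, Set.ncard_image_of_injOn hbij.injOn]
  have hfab : ⌊θ a⌋ ≤ ⌊θ b⌋ :=
    Int.floor_le_floor (hmono.monotoneOn ⟨le_refl a, hab⟩ ⟨hab, le_refl b⟩ hab)
  rw [hcard]
  rw [show (Set.Ioc ⌊θ a⌋ ⌊θ b⌋ : Set ℤ) = ↑(Finset.Ioc ⌊θ a⌋ ⌊θ b⌋) by simp,
    Set.ncard_coe_finset, Int.card_Ioc]
  omega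
end

section
/- Let θᵢ(t) = θᵢ⁰ + ωᵢt and θⱼ(t) = θⱼ⁰ + ωⱼt be clock phases with constant frequencies ωᵢ, ωⱼ ∈ ℝ, let l ≥ 0 and λ ∈ ℤ, and define β(t) = ⌊θᵢ(t-l)⌋ - ⌊θⱼ(t)⌋ + λ. If there exist real bounds m ≤ M such that m ≤ β(t) ≤ M for all t ≥ 0, then ωᵢ = ωⱼ. That is, if the elastic buffer neither overflows nor underflows for all time, the two constant clock frequencies must be exactly equal. -/
/-- If the elastic buffer between two constant-frequency clocks neither
overflows nor underflows for all time (the occupancy `β` stays within fixed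
bounds `m ≤ β(t) ≤ M` for all `t ≥ 0`), then the two frequencies are exactly
equal. -/
theorem bounded_buffer_implies_equal_frequencies
    (θi0 θj0 ωi ωj : ℝ) (θi θj : ℝ → ℝ)
    (hθi : ∀ t : ℝ, θi t = θi0 + ωi * t)
    (hθj : ∀ t : ℝ, θj t = θj0 + ωj * t)
    (l : ℝ) (hl : 0 ≤ l) (lam : ℤ) (β : ℝ → ℤ)
    (hβ : ∀ t : ℝ, β t = ⌊θi (t - l)⌋ - ⌊θj t⌋ + lam)
    (m M : ℝ) (hmM : m ≤ M)
    (hbound : ∀ t : ℝ, 0 ≤ t → m ≤ (β t : ℝ) ∧ (β t : ℝ) ≤ M) :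
    ωi = ωj := by
  by_contra hne
  set δ := ωi - ωj with hδ
  have hδ0 : δ ≠ 0 := sub_ne_zero.mpr hne
  set C := θi0 - ωi * l - θj0 + (lam : ℝ) with hC
  have key : ∀ t : ℝ, 0 ≤ t → δ * t + C - 1 ≤ M ∧ m ≤ δ * t + C + 1 := by
    intro t ht
    obtain ⟨h1, h2⟩ := hbound t ht
    rw [hβ] at h1 h2
    have fi1 : (⌊θi (t - l)⌋ : ℝ) ≤ θi (t - l) := Int.floor_le _
    have fi2 : θi (t - l) - 1 < ⌊θi (t - l)⌋ := Int.sub_one_lt_floor _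
    have fj1 : (⌊θj t⌋ : ℝ) ≤ θj t := Int.floor_le _
    have fj2 : θj t - 1 < ⌊θj t⌋ := Int.sub_one_lt_floor _
    simp only [hθi, hθj] at h1 h2 fi1 fi2 fj1 fj2
    push_cast at h1 h2
    constructor <;> nlinarith
  rcases hδ0.lt_or_gt with hneg | hpos
  · -- δ < 0 : go far enough right to violate the lower bound
    set t := max 0 ((m - C - 2) / δ) with htdef
    have ht : 0 ≤ t := le_max_left _ _
    have h2 := (key t ht).2
    have htge : (m - C - 2) / δ ≤ t := le_max_right _ _
    have : δ * t ≤ m - C - 2 := by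
      have := mul_le_mul_of_nonpos_left htge (le_of_lt hneg)
      rwa [mul_div_cancel₀ _ (ne_of_lt hneg)] at this
    linarith
  · -- δ > 0 : go far enough right to violate the upper bound
    set t := max 0 ((M - C + 2) / δ) with htdef
    have ht : 0 ≤ t := le_max_left _ _
    have h1 := (key t ht).1
    have htge : (M - C + 2) / δ ≤ t := le_max_right _ _
    have : M - C + 2 ≤ δ * t := by
      have := mul_le_mul_of_nonneg_left htge (le_of_lt hpos)
      rwa [mul_div_cancel₀ _ (ne_of_gt hpos)] at this
    linarith
end
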